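/- There is no distributive residuated lattice D containing elements ⊥ < 1 and b, c, ⊤ with 1 < ⊤ such that: c·⊤ = c, ⊤·b = ⊤, 1 ∨ c = ⊤, 1 ∧ b = ⊥, and 1 ∧ c = ⊥. (Core computation for failure of AP in distributive idempotent residuated lattices: from c·b = c one gets ⊤ = b ∨ c, then distributivity gives 1 = 1 ∧ (b ∨ c) = (1∧b) ∨ (1∧c) = ⊥, contradiction.) -/

import Mathlib

/-- A residuated lattice: a lattice-ordered monoid with left and right residuals. -/
class ResiduatedLattice (α : Type*) extends Lattice α, Monoid α where
  ldiv : α → α → α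
  rdiv : α → α → α
  mul_le_iff_le_ldiv : ∀ a b c : α, a * b ≤ c ↔ b ≤ ldiv a c
  mul_le_iff_le_rdiv : ∀ a b c : α, a * b ≤ c ↔ a ≤ rdiv c b

/-- A residuated lattice whose lattice reduct is distributive. -/
class DistribResiduatedLattice (α : Type*) extends ResiduatedLattice α where
  inf_sup_distrib : ∀ x y z : α, x ⊓ (y ⊔ z) = (x ⊓ y) ⊔ (x ⊓ z)

namespace ResiduatedLattice

variable {α : Type*} [ResiduatedLattice α]

lemma mul_le_mul_left' {x y : α} (h : x ≤ y) (a : α) : a * x ≤ a * y := by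
  rw [mul_le_iff_le_ldiv]
  exact le_trans h ((mul_le_iff_le_ldiv a y (a * y)).mp le_rfl)

lemma mul_le_mul_right' {x y : α} (h : x ≤ y) (a : α) : x * a ≤ y * a := by
  rw [mul_le_iff_le_rdiv]
  exact le_trans h ((mul_le_iff_le_rdiv y a (y * a)).mp le_rfl)

lemma sup_mul (x y a : α) : (x ⊔ y) * a = x * a ⊔ y * a := by
  apply le_antisymm
  · rw [mul_le_iff_le_rdiv]
    exact sup_le ((mul_le_iff_le_rdiv x a _).mp le_sup_left)
      ((mul_le_iff_le_rdiv y a _).mp le_sup_right)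
  · exact sup_le (mul_le_mul_right' le_sup_left a) (mul_le_mul_right' le_sup_right a)

end ResiduatedLattice

theorem stmt13 :
    ¬ ∃ (α : Type) (_ : DistribResiduatedLattice α) (bot b c T : α),
      bot < 1 ∧ 1 < T ∧
      c * T = c ∧ T * b = T ∧ (1 : α) ⊔ c = T ∧
      (1 : α) ⊓ b = bot ∧ (1 : α) ⊓ c = bot := by
  rintro ⟨α, _inst, bot, b, c, T, hbot, hT, hcT, hTb, hsup, hinfb, hinfc⟩
  open ResiduatedLattice in
  have hTeq : T = b ⊔ c * b := by
    calc T = T * b := hTb.symm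
    _ = ((1 : α) ⊔ c) * b := by rw [hsup]
    _ = b ⊔ c * b := by rw [ResiduatedLattice.sup_mul, one_mul]
  have hbT : b ≤ T := hTeq ▸ le_sup_left
  have hcb : c * b ≤ c := (ResiduatedLattice.mul_le_mul_left' hbT c).trans hcT.le
  have h1 : (1 : α) ≤ T := le_of_lt hT
  have : (1 : α) ≤ bot := by
    have := DistribResiduatedLattice.inf_sup_distrib (1 : α) b (c * b)
    calc (1 : α) = 1 ⊓ T := (inf_eq_left.mpr h1).symm
    _ = (1 ⊓ b) ⊔ (1 ⊓ (c * b)) := by rw [hTeq, this]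
    _ ≤ bot ⊔ bot := sup_le_sup hinfb.le (le_trans (inf_le_inf_left 1 hcb) hinfc.le)
    _ = bot := sup_idem bot
  exact absurd this (not_le_of_gt hbot)
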